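/- arXiv:1603.08655 — 2 statements merged into one kernel-verified Lean document; each statement's English description precedes it below -/
import Mathlib

section
/- Let N be a reticulation-visible network. Then the number of reticulation nodes of N equals the number of tree node components of N minus one. -/
/-!
Framework for rooted phylogenetic networks, formalized as directed graphs
given by an adjacency relation `A : V → V → Prop` on a vertex type `V`,
with a distinguished root `ρ`.  Leaves are identified with their (unique)
labels, i.e. the labelling is the identity on leaf vertices.
-/

namespace PhyloNet

variable {V : Type} {W : Type}

/-- Indegree of a vertex. -/
noncomputable def inDeg (A : V → V → Prop) (v : V) : ℕ := {u | A u v}.ncard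

/-- Outdegree of a vertex. -/
noncomputable def outDeg (A : V → V → Prop) (v : V) : ℕ := {w | A v w}.ncard

/-- `p` is a directed path (walk) from `u` to `v`, given as the list of its vertices. -/
def IsPath (A : V → V → Prop) (u v : V) (p : List V) : Prop :=
  p.Chain' A ∧ p.head? = some u ∧ p.getLast? = some v

/-- `A` with root `ρ` is a phylogenetic network: a finite rooted acyclic digraph whose
root has indegree 0 and outdegree ≥ 2, from which every node is reachable, and in which
every non-root node is either a leaf (indegree 1, outdegree 0), an internal tree node
(indegree 1, outdegree ≥ 2) or a reticulation (indegree ≥ 2, outdegree 1). -/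
structure IsNetwork (A : V → V → Prop) (ρ : V) : Prop where
  finite : Finite V
  acyclic : ∀ v, ¬ Relation.TransGen A v v
  root_indeg : inDeg A ρ = 0
  root_outdeg : 2 ≤ outDeg A ρ
  reach_from_root : ∀ v, Relation.ReflTransGen A ρ v
  degree_cond : ∀ v, v ≠ ρ →
    (inDeg A v = 1 ∧ (outDeg A v = 0 ∨ 2 ≤ outDeg A v)) ∨ (2 ≤ inDeg A v ∧ outDeg A v = 1)

/-- Reticulation node: indegree ≥ 2 and outdegree 1. -/
def IsRet (A : V → V → Prop) (v : V) : Prop := 2 ≤ inDeg A v ∧ outDeg A v = 1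

/-- Leaf: indegree 1 and outdegree 0. -/
def IsLeaf (A : V → V → Prop) (v : V) : Prop := inDeg A v = 1 ∧ outDeg A v = 0

/-- Tree node: any node that is not a reticulation node. -/
def IsTreeNode (A : V → V → Prop) (v : V) : Prop := ¬ IsRet A v

/-- `u` is visible on `v`: every directed path from the root `ρ` to `v` contains `u`. -/
def Visible (A : V → V → Prop) (ρ u v : V) : Prop := ∀ p, IsPath A ρ v p → u ∈ p

/-- A network is reticulation-visible if every reticulation node is visible on some leaf. -/
def RetVisible (A : V → V → Prop) (ρ : V) : Prop :=
  ∀ r, IsRet A r → ∃ ℓ, IsLeaf A ℓ ∧ Visible A ρ r ℓ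

/-- Undirected adjacency in the subgraph `N − R(N)` induced on tree nodes. -/
def TAdj (A : V → V → Prop) (u v : V) : Prop :=
  IsTreeNode A u ∧ IsTreeNode A v ∧ (A u v ∨ A v u)

/-- `S` is a tree node component: a connected component (ignoring directions) of the
subgraph induced on the tree nodes. -/
def IsTNC (A : V → V → Prop) (S : Set V) : Prop :=
  ∃ u, IsTreeNode A u ∧ S = {v | Relation.ReflTransGen (TAdj A) u v}

/-- `r` is the root of the tree node component `S`: it lies in `S` and has indegree 0
within `N − R(N)`, i.e. it has no tree-node parent. -/
def CompRoot (A : V → V → Prop) (S : Set V) (r : V) : Prop :=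
  r ∈ S ∧ ∀ u, IsTreeNode A u → ¬ A u r

/-- Tree node component `C'` is below tree node component `C''`. -/
def Below (A : V → V → Prop) (C' C'' : Set V) : Prop :=
  ∃ r, IsRet A r ∧ (∃ c, A r c ∧ CompRoot A C' c) ∧ (∃ p ∈ C'', A p r)

/-- A big tree node component: a tree node component with at least two nodes. -/
def BigTNC (A : V → V → Prop) (C : Set V) : Prop :=
  IsTNC A C ∧ ∃ a ∈ C, ∃ b ∈ C, a ≠ b

/-- A single-leaf component: its node set is `{ℓ}` for some leaf `ℓ`. -/
def SingleLeafTNC (A : V → V → Prop) (C : Set V) : Prop :=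
  ∃ ℓ, IsLeaf A ℓ ∧ C = {ℓ}

/-- A lowest big tree node component: a big tree node component `C` such that every
tree node component whose root is a proper descendant of the root of `C` is a
single-leaf component. -/
def LowestBig (A : V → V → Prop) (C : Set V) : Prop :=
  BigTNC A C ∧ ∀ C' r' rC, IsTNC A C' → CompRoot A C' r' → CompRoot A C rC →
    Relation.TransGen A rC r' → SingleLeafTNC A C'

/-- An inner reticulation: all of its parents lie in one and the same tree node component. -/
def InnerRet (A : V → V → Prop) (r : V) : Prop :=
  IsRet A r ∧ ∃ S, IsTNC A S ∧ ∀ p, A p r → p ∈ S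

/-- `IR(C)`: reticulations all of whose parents lie in `C`. -/
def IRset (A : V → V → Prop) (C : Set V) : Set V :=
  {r | IsRet A r ∧ ∀ p, A p r → p ∈ C}

/-- `CR(C)`: reticulations with at least one parent in `C` and at least one parent outside `C`. -/
def CRset (A : V → V → Prop) (C : Set V) : Set V :=
  {r | IsRet A r ∧ (∃ p, A p r ∧ p ∈ C) ∧ (∃ p, A p r ∧ p ∉ C)}

/-- `L_C`: the leaves of the network lying in `C` together with the children of the
inner reticulations below `C`. -/
def LCset (A : V → V → Prop) (C : Set V) : Set V :=
  {ℓ | ℓ ∈ C ∧ IsLeaf A ℓ} ∪ {x | ∃ r ∈ IRset A C, A r x}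

/-- Bicombining: every reticulation node has indegree exactly 2. -/
def Bicombining (A : V → V → Prop) : Prop := ∀ r, IsRet A r → inDeg A r = 2

/-- Galled: every reticulation node `r` has an ancestor `u` admitting two
internal-node-disjoint directed paths from `u` to `r` in which every node other
than `r` is a tree node. -/
def Galled (A : V → V → Prop) : Prop :=
  ∀ r, IsRet A r → ∃ u, Relation.TransGen A u r ∧ ∃ p₁ p₂ : List V,
    IsPath A u r p₁ ∧ IsPath A u r p₂ ∧ p₁ ≠ p₂ ∧
    (∀ x, x ∈ p₁ → x ∈ p₂ → x = u ∨ x = r) ∧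
    (∀ x ∈ p₁, x ≠ r → IsTreeNode A x) ∧ (∀ x ∈ p₂, x ≠ r → IsTreeNode A x)

/-- Restriction of a digraph to a vertex subset. -/
def Restrict (A : V → V → Prop) (S : Set V) : V → V → Prop :=
  fun a b => a ∈ S ∧ b ∈ S ∧ A a b

/-- Descendants of `u` (including `u`); the vertex set of the subnetwork `D_N(u)`. -/
def Desc (A : V → V → Prop) (u : V) : Set V := {v | Relation.ReflTransGen A u v}

/-- Binary network: the root has outdegree 2, leaves have degree 1, and every other
node has total degree 3. -/
def IsBinary (A : V → V → Prop) (ρ : V) : Prop :=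
  outDeg A ρ = 2 ∧ ∀ v, v ≠ ρ →
    (inDeg A v = 1 ∧ outDeg A v = 0) ∨ (inDeg A v = 1 ∧ outDeg A v = 2) ∨
    (inDeg A v = 2 ∧ outDeg A v = 1)

/-- A phylogenetic tree: a network with no reticulation nodes. -/
def IsPhyloTree (A : W → W → Prop) (ρ : W) : Prop :=
  IsNetwork A ρ ∧ ∀ w, ¬ IsRet A w

/-- A node with indegree 1 and outdegree 1 (a suppressible node). -/
def Deg11 (A : V → V → Prop) (v : V) : Prop := inDeg A v = 1 ∧ outDeg A v = 1

/-- There is a directed path from `a` to `b` (of length ≥ 1) all of whose internal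
nodes are suppressible. -/
def SubdivPath (A : V → V → Prop) (a b : V) : Prop :=
  ∃ p : List V, IsPath A a b p ∧ 2 ≤ p.length ∧ ∀ z ∈ p, z ≠ a → z ≠ b → Deg11 A z

/-- `φ` witnesses that the digraph `A'` on the vertex set `S` is a subdivision of the
tree `AT` restricted to the vertex set `SW`: `φ` injectively maps the tree nodes onto
the non-suppressible nodes, edges of the tree correspond exactly to directed paths
whose internal nodes are suppressible, and leaves are mapped according to the leaf
correspondence `θ` (same labels). -/
def SubdivWitness (A' : V → V → Prop) (S : Set V) (AT : W → W → Prop) (SW : Set W)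
    (θ : W → V) (φ : W → V) : Prop :=
  Set.InjOn φ SW ∧ (∀ w ∈ SW, φ w ∈ S) ∧
  (∀ x ∈ S, ¬ Deg11 (Restrict A' S) x → ∃ w ∈ SW, φ w = x) ∧
  (∀ x ∈ SW, ∀ y ∈ SW, (Restrict AT SW x y ↔ SubdivPath (Restrict A' S) (φ x) (φ y))) ∧
  (∀ w ∈ SW, outDeg (Restrict AT SW) w = 0 → φ w = θ w)

/-- The digraph `A'` on vertex set `S` is a subdivision of the tree `AT` on `SW`. -/
def IsSubdivisionOf (A' : V → V → Prop) (S : Set V) (AT : W → W → Prop) (SW : Set W)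
    (θ : W → V) : Prop :=
  ∃ φ, SubdivWitness A' S AT SW θ φ

/-- `E`, `D`, `φ` witness that the subnetwork of `A` on vertex set `S` displays the
subtree of `AT` on vertex set `SW`: `E` is a set of reticulation edges of the
subnetwork containing all but one of the incoming edges of each reticulation node of
the subnetwork, `D` is a set of deleted nodes, and `φ` witnesses that the result is a
subdivision of the subtree. -/
def DisplayWitness (A : V → V → Prop) (S : Set V) (AT : W → W → Prop) (SW : Set W)
    (θ : W → V) (E : Set (V × V)) (D : Set V) (φ : W → V) : Prop :=
  (∀ e ∈ E, Restrict A S e.1 e.2 ∧ 2 ≤ inDeg (Restrict A S) e.2) ∧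
  (∀ r ∈ S, 2 ≤ inDeg (Restrict A S) r →
     ∃ p, Restrict A S p r ∧ (p, r) ∉ E ∧ ∀ q, Restrict A S q r → q ≠ p → (q, r) ∈ E) ∧
  SubdivWitness (fun a b => Restrict A S a b ∧ (a, b) ∉ E) (S \ D) AT SW θ φ

/-- The subnetwork of `A` on vertex set `S` displays the subtree of `AT` on `SW`. -/
def DisplaysOn (A : V → V → Prop) (S : Set V) (AT : W → W → Prop) (SW : Set W)
    (θ : W → V) : Prop :=
  ∃ E D φ, DisplayWitness A S AT SW θ E D φ

/-- The leaves of the subnetwork of `A` induced on vertex set `S`. -/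
def SubLeaves (A : V → V → Prop) (S : Set V) : Set V :=
  {v | v ∈ S ∧ outDeg (Restrict A S) v = 0}

/-- `B` is a soft cluster in the subnetwork of `A` on vertex set `S`: `B` is the
cluster of some node of some phylogenetic tree displayed by that subnetwork. -/
def SoftClusterOn (A : V → V → Prop) (S : Set V) (B : Set V) : Prop :=
  ∃ (W : Type) (AT : W → W → Prop) (ρT : W) (θ : W → V),
    IsPhyloTree AT ρT ∧
    Set.BijOn θ {w | IsLeaf AT w} (SubLeaves A S) ∧
    DisplaysOn A S AT Set.univ θ ∧
    ∃ x : W, θ '' {w | IsLeaf AT w ∧ Relation.ReflTransGen AT x w} = B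

/-- `B` is a soft cluster of the node `u` of `N`: there are `E` and `D` as in the
definition of display such that `u` is a node of `(N − E) − D` and the set of leaves
of `N` below `u` in `(N − E) − D` equals `B`. -/
def SoftClusterAt (A : V → V → Prop) (u : V) (B : Set V) : Prop :=
  ∃ (E : Set (V × V)) (D : Set V),
    (∀ e ∈ E, A e.1 e.2 ∧ 2 ≤ inDeg A e.2) ∧
    (∀ r, 2 ≤ inDeg A r → ∃ p, A p r ∧ (p, r) ∉ E ∧ ∀ q, A q r → q ≠ p → (q, r) ∈ E) ∧
    (∃ (W : Type) (AT : W → W → Prop) (ρT : W) (θ : W → V),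
      IsPhyloTree AT ρT ∧ Set.BijOn θ {w | IsLeaf AT w} {v | IsLeaf A v} ∧
      IsSubdivisionOf (fun a b => A a b ∧ (a, b) ∉ E) (Set.univ \ D) AT Set.univ θ) ∧
    u ∉ D ∧
    {ℓ | IsLeaf A ℓ ∧
      Relation.ReflTransGen (fun a b => A a b ∧ (a, b) ∉ E ∧ a ∉ D ∧ b ∉ D) u ℓ} = B

/-- `w` is the lowest common ancestor of the set `X` in the (tree-like) digraph `A`. -/
def IsLCAIn (A : V → V → Prop) (X : Set V) (w : V) : Prop :=
  (∀ x ∈ X, Relation.ReflTransGen A w x) ∧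
  ∀ w', (∀ x ∈ X, Relation.ReflTransGen A w' x) → Relation.ReflTransGen A w' w

end PhyloNet

/-!
Tree nodes have a single parent, so each tree node component is a tree hanging from a unique
root, a tree node without a tree-node parent, and components correspond to such roots. A root
other than `ρ` has only reticulation parents; conversely the child of a reticulation is a root,
because in a reticulation-visible network it cannot itself be a reticulation: its second parent
would give a path from `ρ` to a leaf below the first reticulation avoiding it. Being a tree node,
that child determines its parent, so `r ↦ child r` is a bijection from the reticulations onto
the roots other than `ρ`.
-/

namespace PhyloNet

section Paths

variable {V : Type} {A : V → V → Prop} {u v x y : V} {p q : List V}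

lemma exists_isPath_of_reflTransGen (h : Relation.ReflTransGen A u v) : ∃ p, IsPath A u v p := by
  obtain ⟨l, hl, hlast⟩ := List.exists_isChain_cons_of_relationReflTransGen h
  refine ⟨u :: l, hl, rfl, ?_⟩
  rw [List.getLast?_eq_getLast_of_ne_nil (List.cons_ne_nil _ _), hlast]

lemma IsPath.reflTransGen_of_mem (hp : IsPath A u v p) (hx : x ∈ p) :
    Relation.ReflTransGen A u x ∧ Relation.ReflTransGen A x v := by
  obtain ⟨hchain, hhead, hlast⟩ := hp
  constructor
  · refine hchain.induction (Relation.ReflTransGen A u ·) _ (fun _ _ h ih => ih.tail h)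
      (fun hne => ?_) x hx
    rw [List.head?_eq_some_head hne, Option.some_inj] at hhead
    rw [hhead]
  · refine hchain.backwards_induction (Relation.ReflTransGen A · v) _ (fun _ _ h ih => ih.head h)
      (fun hne => ?_) x hx
    rw [List.getLast?_eq_getLast_of_ne_nil hne, Option.some_inj] at hlast
    rw [hlast]

lemma IsPath.append (hp : IsPath A u v p) (hq : IsPath A x y q) (hvx : A v x) :
    IsPath A u y (p ++ q) := by
  obtain ⟨hpchain, hphead, hplast⟩ := hp
  obtain ⟨hqchain, hqhead, hqlast⟩ := hq
  have hp : p ≠ [] := by rintro rfl; simp at hphead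
  have hq : q ≠ [] := by rintro rfl; simp at hqhead
  refine ⟨List.isChain_append.mpr ⟨hpchain, hqchain, ?_⟩, ?_, ?_⟩
  · intro a ha b hb
    rw [hplast, Option.mem_some_iff] at ha
    rw [hqhead, Option.mem_some_iff] at hb
    rwa [← ha, ← hb]
  · rwa [List.head?_append_of_ne_nil _ hp]
  · rwa [List.getLast?_append_of_ne_nil _ hq]

variable {ρ : V}

lemma Visible.reflTransGen (hvis : Visible A ρ u v) (hv : Relation.ReflTransGen A ρ v) :
    Relation.ReflTransGen A u v := by
  obtain ⟨p, hp⟩ := exists_isPath_of_reflTransGen hv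
  exact (hp.reflTransGen_of_mem (hvis p hp)).2

lemma not_visible_of_bypass (hx : Relation.ReflTransGen A ρ x) (hxy : A x y)
    (hy : Relation.ReflTransGen A y v) (hux : ¬ Relation.ReflTransGen A u x)
    (hyu : ¬ Relation.ReflTransGen A y u) : ¬ Visible A ρ u v := by
  intro hvis
  obtain ⟨p, hp⟩ := exists_isPath_of_reflTransGen hx
  obtain ⟨q, hq⟩ := exists_isPath_of_reflTransGen hy
  rcases List.mem_append.mp (hvis _ (hp.append hq hxy)) with h | h
  · exact hux (hp.reflTransGen_of_mem h).2
  · exact hyu (hq.reflTransGen_of_mem h).1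

end Paths

section Network

variable {V : Type} {A : V → V → Prop} {ρ u v a b r : V}

lemma existsUnique_adj_of_outDeg_eq_one (h : outDeg A r = 1) : ∃! c, A r c := by
  obtain ⟨c, hc⟩ := Set.ncard_eq_one.mp h
  have hchild : ∀ w, A r w ↔ w = c := fun w => Set.ext_iff.mp hc w
  exact ⟨c, (hchild c).2 rfl, fun w => (hchild w).1⟩

lemma exists_adj_ne_of_two_le_inDeg (hr : 2 ≤ inDeg A r) (u : V) : ∃ q, A q r ∧ q ≠ u := by
  by_contra! h
  have hsub : {q | A q r} ⊆ {u} := fun q hq => h q hq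
  have hle : inDeg A r ≤ 1 := by
    simpa [inDeg] using Set.ncard_le_ncard hsub (Set.finite_singleton u)
  omega

namespace IsNetwork

variable (hN : IsNetwork A ρ)
include hN

lemma not_adj_root : ¬ A u ρ := by
  intro h
  have := hN.finite
  have hpos : 0 < inDeg A ρ := (Set.ncard_pos (Set.toFinite _)).mpr ⟨u, h⟩
  rw [hN.root_indeg] at hpos
  exact hpos.false

lemma isTreeNode_root : IsTreeNode A ρ := fun h => by
  simpa [hN.root_indeg] using h.1

lemma eq_of_adj_of_isTreeNode (hv : IsTreeNode A v) (ha : A a v) (hb : A b v) : a = b := by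
  have hvρ : v ≠ ρ := by rintro rfl; exact hN.not_adj_root ha
  rcases hN.degree_cond v hvρ with ⟨hin, -⟩ | hret
  · obtain ⟨c, hc⟩ := Set.ncard_eq_one.mp hin
    have hparent : ∀ w, A w v ↔ w = c := fun w => Set.ext_iff.mp hc w
    exact ((hparent a).1 ha).trans ((hparent b).1 hb).symm
  · exact absurd hret hv

lemma wellFounded : WellFounded A := by
  have := hN.finite
  have : IsTrans V (Relation.TransGen A) := ⟨fun _ _ _ => Relation.TransGen.trans⟩
  have : Std.Irrefl (Relation.TransGen A) := ⟨hN.acyclic⟩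
  exact Subrelation.wf Relation.TransGen.single (Finite.wellFounded_of_trans_of_irrefl _)

lemma not_isRet_of_adj_isRet (hRV : RetVisible A ρ) {r₁ r₂ : V} (h₁ : IsRet A r₁)
    (h₁₂ : A r₁ r₂) : ¬ IsRet A r₂ := by
  intro h₂
  obtain ⟨ℓ, hℓ, hvis⟩ := hRV r₁ h₁
  have hchild : ∀ w, A r₁ w → w = r₂ := fun _ hw =>
    (existsUnique_adj_of_outDeg_eq_one h₁.2).unique hw h₁₂
  have hr₂ℓ : Relation.ReflTransGen A r₂ ℓ := by
    rcases (hvis.reflTransGen (hN.reach_from_root ℓ)).cases_head with rfl | ⟨w, hw, hwℓ⟩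
    · exact absurd (h₁.2.symm.trans hℓ.2) one_ne_zero
    · exact hchild w hw ▸ hwℓ
  -- A second parent `q` of `r₂` gives a path `ρ ⇝ q → r₂ ⇝ ℓ` avoiding `r₁`.
  obtain ⟨q, hq, hqr₁⟩ := exists_adj_ne_of_two_le_inDeg h₂.1 r₁
  refine not_visible_of_bypass (hN.reach_from_root q) hq hr₂ℓ ?_ ?_ hvis
  · intro hr₁q
    rcases hr₁q.cases_head with rfl | ⟨w, hw, hwq⟩
    · exact hqr₁ rfl
    · exact hN.acyclic r₂ (.tail' (hchild w hw ▸ hwq) hq)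
  · exact fun hr₂r₁ => hN.acyclic r₂ (.tail' hr₂r₁ h₁₂)

lemma eq_of_adj_of_isRet_adj (hRV : RetVisible A ρ) (hr : IsRet A r) (hra : A r a)
    (hb : A b a) : b = r :=
  hN.eq_of_adj_of_isTreeNode (hN.not_isRet_of_adj_isRet hRV hr hra) hb hra

end IsNetwork

end Network

section Components

variable {V : Type} {A : V → V → Prop} {ρ v a b x y : V}

def TreeEdge (A : V → V → Prop) (u v : V) : Prop :=
  IsTreeNode A u ∧ IsTreeNode A v ∧ A u v

def IsTNCRoot (A : V → V → Prop) (a : V) : Prop :=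
  IsTreeNode A a ∧ ∀ u, IsTreeNode A u → ¬ A u a

def treeComponent (A : V → V → Prop) (u : V) : Set V :=
  {v | Relation.ReflTransGen (TAdj A) u v}

instance : Std.Symm (TAdj A) := ⟨fun _ _ h => ⟨h.2.1, h.1, h.2.2.symm⟩⟩

namespace IsNetwork

variable (hN : IsNetwork A ρ)
include hN

lemma exists_isTNCRoot (hv : IsTreeNode A v) :
    ∃ a, IsTNCRoot A a ∧ Relation.ReflTransGen (TreeEdge A) a v := by
  induction v using hN.wellFounded.induction with
  | _ v ih =>
    by_cases hparent : ∃ u, IsTreeNode A u ∧ A u v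
    · obtain ⟨u, hu, huv⟩ := hparent
      obtain ⟨a, ha, hau⟩ := ih u huv hu
      exact ⟨a, ha, hau.tail ⟨hu, hv, huv⟩⟩
    · exact ⟨v, ⟨hv, fun u hu huv => hparent ⟨u, hu, huv⟩⟩, .refl⟩

lemma reflTransGen_treeEdge_tail (ha : IsTNCRoot A a)
    (hx : Relation.ReflTransGen (TreeEdge A) a x) (hxy : TAdj A x y) :
    Relation.ReflTransGen (TreeEdge A) a y := by
  obtain ⟨hxT, hyT, hxy | hyx⟩ := hxy
  · exact hx.tail ⟨hxT, hyT, hxy⟩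
  · rcases hx.cases_tail with rfl | ⟨w, haw, hwx⟩
    · exact absurd hyx (ha.2 y hyT)
    · rwa [← hN.eq_of_adj_of_isTreeNode hxT hwx.2.2 hyx]

lemma reflTransGen_treeEdge_of_tAdj (ha : IsTNCRoot A a)
    (h : Relation.ReflTransGen (TAdj A) a b) : Relation.ReflTransGen (TreeEdge A) a b := by
  induction h with
  | refl => exact .refl
  | tail _ hbc ih => exact hN.reflTransGen_treeEdge_tail ha ih hbc

lemma eq_of_isTNCRoot (ha : IsTNCRoot A a) (hb : IsTNCRoot A b)
    (h : Relation.ReflTransGen (TAdj A) a b) : a = b := by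
  rcases (hN.reflTransGen_treeEdge_of_tAdj ha h).cases_tail with rfl | ⟨w, -, hwb⟩
  · rfl
  · exact absurd hwb.2.2 (hb.2 w hwb.1)

lemma setOf_isTNC_eq_image : {S | IsTNC A S} = treeComponent A '' {a | IsTNCRoot A a} := by
  ext S
  constructor
  · rintro ⟨u, hu, rfl⟩
    obtain ⟨a, ha, hau⟩ := hN.exists_isTNCRoot hu
    have hau : Relation.ReflTransGen (TAdj A) a u :=
      Relation.ReflTransGen.mono (fun _ _ h => ⟨h.1, h.2.1, .inl h.2.2⟩) _ _ hau
    exact ⟨a, ha, Set.ext fun v => ⟨(symm hau).trans, hau.trans⟩⟩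
  · rintro ⟨a, ha, rfl⟩
    exact ⟨a, ha.1, rfl⟩

lemma ncard_setOf_isTNC : {S | IsTNC A S}.ncard = {a | IsTNCRoot A a}.ncard := by
  rw [hN.setOf_isTNC_eq_image]
  refine Set.InjOn.ncard_image fun a ha b hb hab => hN.eq_of_isTNCRoot ha hb ?_
  exact (Set.ext_iff.mp hab b).2 .refl

lemma isTNCRoot_iff (hRV : RetVisible A ρ) :
    IsTNCRoot A a ↔ a = ρ ∨ ∃ r, IsRet A r ∧ A r a := by
  constructor
  · rintro ⟨ha, hroot⟩
    refine or_iff_not_imp_left.mpr fun haρ => ?_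
    obtain ⟨r, -, hra⟩ := (hN.reach_from_root a).cases_tail.resolve_left haρ
    exact ⟨r, not_not.mp fun hr => hroot r hr hra, hra⟩
  · rintro (rfl | ⟨r, hr, hra⟩)
    · exact ⟨hN.isTreeNode_root, fun _ _ => hN.not_adj_root⟩
    · refine ⟨hN.not_isRet_of_adj_isRet hRV hr hra, fun u hu hua => hu ?_⟩
      rwa [hN.eq_of_adj_of_isRet_adj hRV hr hra hua]

lemma ncard_children_isRet (hRV : RetVisible A ρ) :
    {a | ∃ r, IsRet A r ∧ A r a}.ncard = {r | IsRet A r}.ncard := by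
  choose! child hchild hunique using
    fun r (hr : IsRet A r) => existsUnique_adj_of_outDeg_eq_one hr.2
  have himage : {a | ∃ r, IsRet A r ∧ A r a} = child '' {r | IsRet A r} := by
    ext a
    constructor
    · rintro ⟨r, hr, hra⟩
      exact ⟨r, hr, (hunique r hr a hra).symm⟩
    · rintro ⟨r, hr, rfl⟩
      exact ⟨r, hr, hchild r hr⟩
  rw [himage]
  refine Set.InjOn.ncard_image fun r hr r' hr' hrr' => ?_
  exact hN.eq_of_adj_of_isRet_adj hRV hr' (hchild r' hr') (hrr' ▸ hchild r hr)

end IsNetwork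

end Components

/-- In a reticulation-visible network, the number of reticulation nodes equals the
number of tree node components minus one. -/
theorem ret_count_eq_components_sub_one {V : Type} (A : V → V → Prop) (ρ : V)
    (hN : IsNetwork A ρ) (hRV : RetVisible A ρ) :
    {r | IsRet A r}.ncard = {S : Set V | IsTNC A S}.ncard - 1 := by
  have := hN.finite
  have hroots : {a | IsTNCRoot A a} = insert ρ {a | ∃ r, IsRet A r ∧ A r a} :=
    Set.ext fun _ => hN.isTNCRoot_iff hRV
  have hρ : ρ ∉ {a | ∃ r, IsRet A r ∧ A r a} := fun ⟨_, _, hr⟩ => hN.not_adj_root hr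
  rw [hN.ncard_setOf_isTNC, hroots, Set.ncard_insert_of_notMem hρ, hN.ncard_children_isRet hRV]
  omega

end PhyloNet
end

section
/- Let N be a binary reticulation-visible network, B ⊆ L(N), and C a lowest big tree node component of N. (i) If ℓ is a leaf of N lying in C with ℓ ∉ B, then for every node u on the directed path in C from ρ(C) to ℓ, B is not a soft cluster of u in N. (ii) For every r ∈ IR(C) with c(r) ∉ B, and for every node u on the directed path in C from ρ(C) to lca_C(p(r)) (both endpoints included), B is not a soft cluster of u in N, where lca_C(p(r)) denotes the lowest common ancestor in the tree C of the parents of r. -/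
/-!
If `B` is the soft cluster of `u`, witnessed by a display `(N − E) − D` of a tree `T`, then `u`
survives and the image of the root of `T` lies above every surviving node. Hence every surviving
node strictly below `u` keeps a surviving parent along an undeleted edge. Nodes of a tree node
component have a single parent, so walking up inside `C` from a surviving node towards `u` never
leaves the display; as leaves always survive, every leaf of `C` below `u` lies in `B`.
The child `c` of a reticulation `r` below the root of a lowest big component is a leaf:
reticulation visibility forbids a reticulation child, and the component rooted at `c` is then a
single-leaf one. So `c` survives, hence `r` and the parent of `r` that is kept survive, and that
parent lies in `C` below the lowest common ancestor of the parents of `r`, so `c ∈ B`.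
-/

namespace PhyloNet

variable {V W : Type} {A : V → V → Prop} {ρ : V}

lemma eq_of_inDeg_eq_one {v a b : V} (h : inDeg A v = 1) (ha : A a v) (hb : A b v) :
    a = b := by
  obtain ⟨x, hx⟩ := Set.ncard_eq_one.1 h
  have ha' : a ∈ {u | A u v} := ha
  have hb' : b ∈ {u | A u v} := hb
  rw [hx] at ha' hb'
  exact ha'.trans hb'.symm

lemma eq_of_outDeg_eq_one {v a b : V} (h : outDeg A v = 1) (ha : A v a) (hb : A v b) :
    a = b :=
  eq_of_inDeg_eq_one (A := flip A) h ha hb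

lemma IsPath.reflTransGen {u v : V} {p : List V} (h : IsPath A u v p) :
    Relation.ReflTransGen A u v := by
  obtain ⟨hchain, hhead, hlast⟩ := h
  obtain ⟨l, rfl⟩ := List.head?_eq_some_iff.1 hhead
  rw [List.getLast?_eq_some_getLast (List.cons_ne_nil _ _), Option.some_inj] at hlast
  exact List.relationReflTransGen_of_exists_isChain_cons l hchain hlast

lemma reflTransGen_and_of_forall_between {P : V → Prop} {a b : V}
    (h : Relation.ReflTransGen A a b)
    (hP : ∀ y, Relation.ReflTransGen A a y → Relation.ReflTransGen A y b → P y) :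
    Relation.ReflTransGen (fun x y => A x y ∧ P y) a b := by
  induction h with
  | refl => exact .refl
  | tail hay hyb ih =>
    exact (ih fun x hax hxy => hP x hax (hxy.tail hyb)).tail ⟨hyb, hP _ (hay.tail hyb) .refl⟩

lemma Visible.not_reflTransGen_avoiding {u v : V} (h : Visible A ρ u v) (hρ : ρ ≠ u) :
    ¬ Relation.ReflTransGen (fun a b => A a b ∧ b ≠ u) ρ v := by
  intro hρv
  obtain ⟨l, hchain, hlast⟩ := List.exists_isChain_cons_of_relationReflTransGen hρv
  have hpath : IsPath A ρ v (ρ :: l) :=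
    ⟨hchain.imp fun _ _ hab => hab.1, rfl,
      by rw [List.getLast?_eq_some_getLast (List.cons_ne_nil _ _), hlast]⟩
  rcases List.mem_cons.1 (h _ hpath) with hu | hu
  · exact hρ hu.symm
  · exact hchain.cons_induction (· ≠ u) l (fun _ _ hxy _ => hxy.2) hρ u hu rfl

namespace IsNetwork

lemma wellFounded_s17 (hN : IsNetwork A ρ) : WellFounded A := by
  have := hN.finite
  have : IsTrans V (Relation.TransGen A) := ⟨fun _ _ _ => .trans⟩
  have : Std.Irrefl (Relation.TransGen A) := ⟨hN.acyclic⟩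
  exact (Finite.wellFounded_of_trans_of_irrefl _).mono fun _ _ => Relation.TransGen.single

lemma not_adj_root_s17 (hN : IsNetwork A ρ) (x : V) : ¬ A x ρ := by
  have := hN.finite
  have hempty : {u | A u ρ} = ∅ := (Set.ncard_eq_zero (Set.toFinite _)).1 hN.root_indeg
  exact fun h => hempty.subset h

lemma inDeg_eq_one_of_isTreeNode (hN : IsNetwork A ρ) {u v : V} (ht : IsTreeNode A v)
    (huv : A u v) : inDeg A v = 1 := by
  have hv : v ≠ ρ := by rintro rfl; exact hN.not_adj_root_s17 u huv
  rcases hN.degree_cond v hv with h | h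
  · exact h.1
  · exact absurd h ht

end IsNetwork

lemma RetVisible.isTreeNode_of_adj (hN : IsNetwork A ρ) (hRV : RetVisible A ρ) {r c : V}
    (hr : IsRet A r) (hrc : A r c) : IsTreeNode A c := by
  intro hc
  obtain ⟨p, hpc, hpr⟩ := Set.exists_ne_of_one_lt_ncard hc.1 r
  obtain ⟨ℓ, hℓ, hvis⟩ := hRV r hr
  have hcycle : ∀ {x y}, A x y → Relation.ReflTransGen A y x → False :=
    fun hxy hyx => hN.acyclic _ (.head' hxy hyx)
  have hρr : ρ ≠ r := by
    obtain ⟨q, hq⟩ := Set.exists_ne_of_one_lt_ncard hr.1 r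
    rintro rfl
    exact hN.not_adj_root_s17 q hq.1
  have hcr : c ≠ r := fun h => hcycle hrc (h ▸ .refl)
  have hbelow : ∀ y, Relation.ReflTransGen A r y → y ≠ r → Relation.ReflTransGen A c y := by
    intro y hry hyr
    rcases hry.cases_head with rfl | ⟨x, hrx, hxy⟩
    · exact absurd rfl hyr
    · rwa [eq_of_outDeg_eq_one hr.2 hrx hrc] at hxy
  have hrℓ : Relation.ReflTransGen A r ℓ := by
    by_contra hnot
    exact hvis.not_reflTransGen_avoiding hρr <| reflTransGen_and_of_forall_between
      (hN.reach_from_root ℓ) fun y _ hyℓ hyr => hnot (hyr ▸ hyℓ)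
  have hcℓ := hbelow ℓ hrℓ fun h => one_ne_zero ((h ▸ hr.2 : outDeg A ℓ = 1).symm.trans hℓ.2)
  have hρp := reflTransGen_and_of_forall_between (P := (· ≠ r)) (hN.reach_from_root p)
    fun y _ hyp hyr => hcycle hpc (hbelow p (hyr ▸ hyp) hpr)
  have hcℓ' := reflTransGen_and_of_forall_between (P := (· ≠ r)) hcℓ
    fun y hcy _ hyr => hcycle hrc (hyr ▸ hcy)
  exact hvis.not_reflTransGen_avoiding hρr ((hρp.tail ⟨hpc, hcr⟩).trans hcℓ')

lemma IsTNC.isTreeNode {C : Set V} (hC : IsTNC A C) {v : V} (hv : v ∈ C) :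
    IsTreeNode A v := by
  obtain ⟨u, hu, rfl⟩ := hC
  rcases Relation.ReflTransGen.cases_tail hv with rfl | ⟨_, _, hadj⟩
  · exact hu
  · exact hadj.2.1

lemma LowestBig.isLeaf_of_adj (hN : IsNetwork A ρ) (hRV : RetVisible A ρ) {C : Set V}
    {rC r c : V} (hC : LowestBig A C) (hrC : CompRoot A C rC) (hr : IsRet A r)
    (hrCr : Relation.ReflTransGen A rC r) (hrc : A r c) : IsLeaf A c := by
  have hct : IsTreeNode A c := hRV.isTreeNode_of_adj hN hr hrc
  have hroot : CompRoot A {v | Relation.ReflTransGen (TAdj A) c v} c := by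
    refine ⟨.refl, fun q hq hqc => hq ?_⟩
    rwa [eq_of_inDeg_eq_one (hN.inDeg_eq_one_of_isTreeNode hct hrc) hqc hrc]
  obtain ⟨ℓ, hℓ, hcomp⟩ := hC.2 _ c rC ⟨c, hct, rfl⟩ hroot hrC (.tail' hrCr hrc)
  have hc : c ∈ {v | Relation.ReflTransGen (TAdj A) c v} := Relation.ReflTransGen.refl
  rw [hcomp] at hc
  rwa [Set.mem_singleton_iff.1 hc]

lemma Deg11.exists_adj {v : V} (h : Deg11 A v) : ∃ u, A u v :=
  Set.nonempty_of_ncard_ne_zero (h.1 ▸ one_ne_zero : inDeg A v ≠ 0)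

namespace SubdivWitness

variable {A' : V → V → Prop} {S : Set V} {AT : W → W → Prop} {ρT : W} {θ φ : W → V}

lemma mem_of_isLeaf (hw : SubdivWitness A' S AT Set.univ θ φ)
    (hθ : Set.BijOn θ {w | IsLeaf AT w} {v | IsLeaf A v}) {v : V} (hv : IsLeaf A v) :
    v ∈ S := by
  obtain ⟨w, hwleaf, rfl⟩ := hθ.surjOn hv
  have hout : outDeg (Restrict AT Set.univ) w = 0 := by
    simpa [outDeg, Restrict] using hwleaf.2
  rw [← hw.2.2.2.2 w trivial hout]
  exact hw.2.1 w trivial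

lemma reflTransGen_image (hw : SubdivWitness A' S AT Set.univ θ φ) {w w' : W}
    (h : Relation.ReflTransGen AT w w') :
    Relation.ReflTransGen (Restrict A' S) (φ w) (φ w') := by
  induction h with
  | refl => exact .refl
  | tail _ hab ih =>
    obtain ⟨p, hp, -⟩ := (hw.2.2.2.1 _ trivial _ trivial).1 ⟨trivial, trivial, hab⟩
    exact ih.trans hp.reflTransGen

lemma exists_image_reflTransGen (hwf : WellFounded A') (hw : SubdivWitness A' S AT Set.univ θ φ)
    {s : V} (hs : s ∈ S) : ∃ w, Relation.ReflTransGen (Restrict A' S) (φ w) s := by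
  induction s using hwf.induction with
  | _ x ih =>
    by_cases hx : Deg11 (Restrict A' S) x
    · obtain ⟨q, hq⟩ := hx.exists_adj
      obtain ⟨w, hw⟩ := ih q hq.2.2 hq.1
      exact ⟨w, hw.tail hq⟩
    · obtain ⟨w, -, rfl⟩ := hw.2.2.1 x hs hx
      exact ⟨w, .refl⟩

lemma image_root_reflTransGen (hwf : WellFounded A') (hT : IsNetwork AT ρT)
    (hw : SubdivWitness A' S AT Set.univ θ φ) {s : V} (hs : s ∈ S) :
    Relation.ReflTransGen (Restrict A' S) (φ ρT) s := by
  obtain ⟨w, hws⟩ := hw.exists_image_reflTransGen hwf hs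
  exact (hw.reflTransGen_image (hT.reach_from_root w)).trans hws

lemma exists_adj_of_ne_image_root (hT : IsNetwork AT ρT)
    (hw : SubdivWitness A' S AT Set.univ θ φ) {z : V} (hz : z ∈ S) (hne : z ≠ φ ρT) :
    ∃ q, Restrict A' S q z := by
  by_cases hdeg : Deg11 (Restrict A' S) z
  · exact hdeg.exists_adj
  obtain ⟨w, -, rfl⟩ := hw.2.2.1 z hz hdeg
  rcases (hT.reach_from_root w).cases_tail with rfl | ⟨w₀, -, hw₀⟩
  · exact absurd rfl hne
  obtain ⟨p, hp, -⟩ := (hw.2.2.2.1 w₀ trivial w trivial).1 ⟨trivial, trivial, hw₀⟩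
  rcases hp.reflTransGen.cases_tail with heq | hpred
  · rw [hw.1 trivial trivial heq] at hw₀
    exact absurd (.single hw₀) (hT.acyclic w₀)
  · exact hpred.imp fun _ h => h.2

variable {E : Set (V × V)} {D : Set V}

lemma exists_parent_of_transGen (hN : IsNetwork A ρ) (hT : IsNetwork AT ρT)
    (hw : SubdivWitness (fun a b => A a b ∧ (a, b) ∉ E) (Set.univ \ D) AT Set.univ θ φ)
    {u z : V} (hu : u ∉ D) (hz : z ∉ D) (huz : Relation.TransGen A u z) :
    ∃ q, A q z ∧ (q, z) ∉ E ∧ q ∉ D := by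
  have hwf : WellFounded fun a b => A a b ∧ (a, b) ∉ E := hN.wellFounded_s17.mono fun _ _ h => h.1
  have hne : z ≠ φ ρT := by
    rintro rfl
    have hzu : Relation.ReflTransGen A (φ ρT) u := Relation.ReflTransGen.mono
      (fun _ _ h => h.2.2.1) _ _ (hw.image_root_reflTransGen hwf hT ⟨trivial, hu⟩)
    exact hN.acyclic u (huz.trans_left hzu)
  obtain ⟨q, hqD, -, hqz, hqE⟩ := hw.exists_adj_of_ne_image_root hT ⟨trivial, hz⟩ hne
  exact ⟨q, hqz, hqE, hqD.2⟩

lemma notMem_of_inDeg_eq_one (hN : IsNetwork A ρ) (hT : IsNetwork AT ρT)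
    (hw : SubdivWitness (fun a b => A a b ∧ (a, b) ∉ E) (Set.univ \ D) AT Set.univ θ φ)
    {u a z : V} (hu : u ∉ D) (hz : z ∉ D) (hua : Relation.ReflTransGen A u a) (haz : A a z)
    (hdeg : inDeg A z = 1) : (a, z) ∉ E ∧ a ∉ D := by
  obtain ⟨q, hqz, hqE, hqD⟩ := hw.exists_parent_of_transGen hN hT hu hz (.tail' hua haz)
  rw [eq_of_inDeg_eq_one hdeg haz hqz]
  exact ⟨hqE, hqD⟩

lemma reflTransGen_of_inDeg_eq_one (hN : IsNetwork A ρ) (hT : IsNetwork AT ρT)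
    (hw : SubdivWitness (fun a b => A a b ∧ (a, b) ∉ E) (Set.univ \ D) AT Set.univ θ φ)
    {R : V → V → Prop} (hR : ∀ a b, R a b → A a b ∧ inDeg A b = 1) {u t : V}
    (hu : u ∉ D) (ht : t ∉ D) (hut : Relation.ReflTransGen R u t) :
    Relation.ReflTransGen (fun a b => A a b ∧ (a, b) ∉ E ∧ a ∉ D ∧ b ∉ D) u t := by
  induction hut with
  | refl => exact .refl
  | tail hua hab ih =>
    obtain ⟨hadj, hdeg⟩ := hR _ _ hab
    obtain ⟨habE, haD⟩ := hw.notMem_of_inDeg_eq_one hN hT hu ht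
      (Relation.ReflTransGen.mono (fun _ _ h => (hR _ _ h).1) _ _ hua) hadj hdeg
    exact (ih haD).tail ⟨hadj, habE, haD, ht⟩

end SubdivWitness

theorem soft_cluster_excluded_on_paths_general {V : Type} (A : V → V → Prop) (ρ : V)
    (hN : IsNetwork A ρ) (hRV : RetVisible A ρ)
    (B : Set V)
    (C : Set V) (rC : V) (hC : LowestBig A C) (hrC : CompRoot A C rC) :
    (∀ ℓ, IsLeaf A ℓ → ℓ ∈ C → ℓ ∉ B →
      ∀ u, Relation.ReflTransGen (Restrict A C) rC u →
        Relation.ReflTransGen (Restrict A C) u ℓ → ¬ SoftClusterAt A u B) ∧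
    (∀ r ∈ IRset A C, (∀ x, A r x → x ∉ B) →
      ∀ w, IsLCAIn (Restrict A C) {p | A p r} w →
        ∀ u, Relation.ReflTransGen (Restrict A C) rC u →
          Relation.ReflTransGen (Restrict A C) u w → ¬ SoftClusterAt A u B) := by
  have hCdeg : ∀ a b, Restrict A C a b → A a b ∧ inDeg A b = 1 := fun _ _ h =>
    ⟨h.2.2, hN.inDeg_eq_one_of_isTreeNode (hC.1.1.isTreeNode h.2.1) h.2.2⟩
  have hCA : ∀ {a b}, Relation.ReflTransGen (Restrict A C) a b → Relation.ReflTransGen A a b :=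
    Relation.ReflTransGen.mono (fun _ _ h => h.2.2) _ _
  refine ⟨?_, ?_⟩
  · rintro ℓ hℓ - hℓB u - huℓ ⟨E, D, -, -, ⟨W, AT, ρT, θ, hT, hθ, φ, hw⟩, huD, rfl⟩
    exact hℓB ⟨hℓ, hw.reflTransGen_of_inDeg_eq_one hN hT.1 hCdeg huD
      (hw.mem_of_isLeaf hθ hℓ).2 huℓ⟩
  · rintro r ⟨hr, -⟩ hrB w hlca u hrCu huw ⟨E, D, -, -, ⟨W, AT, ρT, θ, hT, hθ, φ, hw⟩, huD, rfl⟩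
    obtain ⟨c, hrc⟩ : ∃ c, A r c :=
      Set.nonempty_of_ncard_ne_zero (hr.2 ▸ one_ne_zero : outDeg A r ≠ 0)
    obtain ⟨p, hpr, -⟩ := Set.exists_ne_of_one_lt_ncard hr.1 r
    have hur : Relation.TransGen A u r := .tail' (hCA (huw.trans (hlca.1 p hpr))) hpr
    have hc := hC.isLeaf_of_adj hN hRV hrC hr ((hCA hrCu).trans hur.to_reflTransGen) hrc
    have hcD := (hw.mem_of_isLeaf hθ hc).2
    obtain ⟨hrcE, hrD⟩ := hw.notMem_of_inDeg_eq_one hN hT.1 huD hcD hur.to_reflTransGen hrc hc.1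
    obtain ⟨q, hqr, hqE, hqD⟩ := hw.exists_parent_of_transGen hN hT.1 huD hrD hur
    have huq := hw.reflTransGen_of_inDeg_eq_one hN hT.1 hCdeg huD hqD (huw.trans (hlca.1 q hqr))
    exact hrB c hrc ⟨hc, (huq.tail ⟨hqr, hqE, hqD, hrD⟩).tail ⟨hrc, hrcE, hrD, hcD⟩⟩

/-- Let `N` be a binary reticulation-visible network, `B ⊆ L(N)`, `C` a lowest big tree
node component with root `rC`.
(i) If `ℓ` is a leaf of `N` in `C` with `ℓ ∉ B`, then `B` is not a soft cluster of any
node on the directed path in `C` from `rC` to `ℓ`.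
(ii) For every `r ∈ IR(C)` with `c(r) ∉ B`, `B` is not a soft cluster of any node on
the directed path in `C` from `rC` to the lowest common ancestor in `C` of the
parents of `r` (both endpoints included). -/
theorem soft_cluster_excluded_on_paths {V : Type} (A : V → V → Prop) (ρ : V)
    (hN : IsNetwork A ρ) (hbin : IsBinary A ρ) (hRV : RetVisible A ρ)
    (B : Set V) (hB : B ⊆ {v | IsLeaf A v})
    (C : Set V) (rC : V) (hC : LowestBig A C) (hrC : CompRoot A C rC) :
    (∀ ℓ, IsLeaf A ℓ → ℓ ∈ C → ℓ ∉ B →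
      ∀ u, Relation.ReflTransGen (Restrict A C) rC u →
        Relation.ReflTransGen (Restrict A C) u ℓ → ¬ SoftClusterAt A u B) ∧
    (∀ r ∈ IRset A C, (∀ x, A r x → x ∉ B) →
      ∀ w, IsLCAIn (Restrict A C) {p | A p r} w →
        ∀ u, Relation.ReflTransGen (Restrict A C) rC u →
          Relation.ReflTransGen (Restrict A C) u w → ¬ SoftClusterAt A u B) :=
  soft_cluster_excluded_on_paths_general A ρ hN hRV B C rC hC hrC

end PhyloNet
end
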